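/- Let χ be the unique nonprincipal Dirichlet character modulo 4 (so χ(n) = 0 if n is even, χ(n) = 1 if n ≡ 1 (mod 4), χ(n) = −1 if n ≡ 3 (mod 4)). Fix (ν₁, ν₂, ν₃) ∈ {1, 2}³ with not all νᵢ equal to 2. Then, as N → ∞, the sum of χ^{ν₁}(m₁)χ^{ν₂}(m₂)χ^{ν₃}(m₃) over all ordered triples (m₁, m₂, m₃) of pairwise coprime positive odd integers with m₁m₂m₃ squarefree and m₁m₂m₃ ≤ N is O(N log N). -/

import Mathlib

open Filter
noncomputable section
open scoped Classical

/-- The nonprincipal Dirichlet character modulo 4, as a function `ℕ → ℝ`. -/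
def chi4 (n : ℕ) : ℝ :=
  if n % 4 = 1 then 1 else if n % 4 = 3 then -1 else 0

/-- The character sum over ordered triples of pairwise coprime positive odd integers
with squarefree product at most `N`. -/
def charTripleSum (ν₁ ν₂ ν₃ : ℕ) (N : ℕ) : ℝ :=
  ∑ t ∈ (Finset.Icc 1 N ×ˢ Finset.Icc 1 N ×ˢ Finset.Icc 1 N).filter
      (fun t : ℕ × ℕ × ℕ => Odd t.1 ∧ Odd t.2.1 ∧ Odd t.2.2 ∧
        Nat.Coprime t.1 t.2.1 ∧ Nat.Coprime t.1 t.2.2 ∧ Nat.Coprime t.2.1 t.2.2 ∧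
        Squarefree (t.1 * t.2.1 * t.2.2) ∧ t.1 * t.2.1 * t.2.2 ≤ N),
    chi4 t.1 ^ ν₁ * chi4 t.2.1 ^ ν₂ * chi4 t.2.2 ^ ν₃

namespace Aux15


lemma chi4_cases (n : ℕ) : chi4 n = 0 ∨ chi4 n = 1 ∨ chi4 n = -1 := by
  unfold chi4; split_ifs <;> simp

lemma chi4_abs_le (n : ℕ) : |chi4 n| ≤ 1 := by
  rcases chi4_cases n with h | h | h <;> rw [h] <;> norm_num

lemma chi4_one : chi4 1 = 1 := by norm_num [chi4]

lemma chi4_zero : chi4 0 = 0 := by norm_num [chi4]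

lemma chi4_mul (m n : ℕ) : chi4 (m * n) = chi4 m * chi4 n := by
  have hm : m % 4 = 0 ∨ m % 4 = 1 ∨ m % 4 = 2 ∨ m % 4 = 3 := by omega
  have hn : n % 4 = 0 ∨ n % 4 = 1 ∨ n % 4 = 2 ∨ n % 4 = 3 := by omega
  unfold chi4; rw [Nat.mul_mod]
  rcases hm with h | h | h | h <;> rcases hn with h' | h' | h' | h' <;>
    rw [h, h'] <;> norm_num

lemma chi4_pow (n k : ℕ) : chi4 (n ^ k) = chi4 n ^ k := by
  induction k with
  | zero => simpa using chi4_one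
  | succ j ih => rw [pow_succ, pow_succ, chi4_mul, ih]

lemma chi4_of_even {n : ℕ} (h : ¬ Odd n) : chi4 n = 0 := by
  rw [Nat.odd_iff] at h
  have : n % 4 = 0 ∨ n % 4 = 2 := by omega
  unfold chi4; rcases this with h' | h' <;> rw [h'] <;> norm_num

lemma chi4_sq_of_odd {n : ℕ} (h : Odd n) : chi4 n ^ 2 = 1 := by
  rw [Nat.odd_iff] at h
  have : n % 4 = 1 ∨ n % 4 = 3 := by omega
  unfold chi4; rcases this with h' | h' <;> rw [h'] <;> norm_num

/-- partial sums of chi4 -/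
lemma P_eq (x : ℕ) :
    ∑ j ∈ Finset.Icc 1 x, chi4 j = if x % 4 = 1 ∨ x % 4 = 2 then 1 else 0 := by
  induction x with
  | zero => simp
  | succ n ih =>
    rw [Finset.sum_Icc_succ_top (by omega), ih]
    have h : n % 4 = 0 ∨ n % 4 = 1 ∨ n % 4 = 2 ∨ n % 4 = 3 := by omega
    rcases h with h | h | h | h
    · have h1 : (n+1) % 4 = 1 := by omega
      simp [chi4, h, h1]
    · have h1 : (n+1) % 4 = 2 := by omega
      simp [chi4, h, h1]
    · have h1 : (n+1) % 4 = 3 := by omega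
      simp [chi4, h, h1]
    · have h1 : (n+1) % 4 = 0 := by omega
      simp [chi4, h, h1]

lemma P_nonneg (x : ℕ) : 0 ≤ ∑ j ∈ Finset.Icc 1 x, chi4 j := by
  rw [P_eq]; split_ifs <;> norm_num

lemma P_le_one (x : ℕ) : ∑ j ∈ Finset.Icc 1 x, chi4 j ≤ 1 := by
  rw [P_eq]; split_ifs <;> norm_num

lemma P_abs_le (x : ℕ) : |∑ j ∈ Finset.Icc 1 x, chi4 j| ≤ 1 := by
  rw [abs_le]; exact ⟨by linarith [P_nonneg x], P_le_one x⟩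

/-- Abel summation identity -/
lemma abel_identity (f a : ℕ → ℝ) (y : ℕ) :
    ∑ u ∈ Finset.Icc 1 y, f u * a u
      = (∑ u ∈ Finset.Icc 1 y, (∑ j ∈ Finset.Icc 1 u, f j) * (a u - a (u+1)))
        + (∑ j ∈ Finset.Icc 1 y, f j) * a (y+1) := by
  induction y with
  | zero => simp
  | succ n ih =>
    rw [Finset.sum_Icc_succ_top (a := 1) (b := n) (by omega) (fun u => f u * a u),
      Finset.sum_Icc_succ_top (by omega)
        (fun u => (∑ j ∈ Finset.Icc 1 u, f j) * (a u - a (u+1))),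
      Finset.sum_Icc_succ_top (by omega) f, ih]
    ring

lemma abel_telescope (a : ℕ → ℝ) (y : ℕ) :
    ∑ u ∈ Finset.Icc 1 y, (a u - a (u+1)) = a 1 - a (y+1) := by
  induction y with
  | zero => simp
  | succ n ih =>
    rw [Finset.sum_Icc_succ_top (by omega) (fun u => a u - a (u+1)), ih]; ring

/-- Abel summation bound, using the chi4 partial-sum bounds -/
lemma abel_le (a : ℕ → ℝ) (y : ℕ)
    (ha0 : ∀ u, 1 ≤ u → 0 ≤ a u) (hdec : ∀ u, 1 ≤ u → a (u+1) ≤ a u) :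
    ∑ u ∈ Finset.Icc 1 y, chi4 u * a u ≤ a 1 := by
  rw [abel_identity]
  have h1 : ∑ u ∈ Finset.Icc 1 y, (∑ j ∈ Finset.Icc 1 u, chi4 j) * (a u - a (u+1))
      ≤ ∑ u ∈ Finset.Icc 1 y, (a u - a (u+1)) := by
    apply Finset.sum_le_sum
    intro u hu
    have hu1 : 1 ≤ u := (Finset.mem_Icc.mp hu).1
    have hΔ : 0 ≤ a u - a (u+1) := by linarith [hdec u hu1]
    calc (∑ j ∈ Finset.Icc 1 u, chi4 j) * (a u - a (u+1))
        ≤ 1 * (a u - a (u+1)) := by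
          apply mul_le_mul_of_nonneg_right (P_le_one u) hΔ
      _ = a u - a (u+1) := one_mul _
  have h2 : (∑ j ∈ Finset.Icc 1 y, chi4 j) * a (y+1) ≤ a (y+1) := by
    calc (∑ j ∈ Finset.Icc 1 y, chi4 j) * a (y+1) ≤ 1 * a (y+1) :=
          mul_le_mul_of_nonneg_right (P_le_one y) (ha0 _ (by omega))
      _ = a (y+1) := one_mul _
  rw [abel_telescope] at h1
  linarith





/-- pairs (u,v) of positive integers with u*v ≤ M -/
def pairSet (M : ℕ) : Finset (ℕ × ℕ) :=
  (Finset.Icc 1 M ×ˢ Finset.Icc 1 M).filter (fun p => p.1 * p.2 ≤ M)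

lemma icc_filter_mul (M u : ℕ) (hu : 1 ≤ u) :
    (Finset.Icc 1 M).filter (fun v => u * v ≤ M) = Finset.Icc 1 (M / u) := by
  ext v
  simp only [Finset.mem_filter, Finset.mem_Icc]
  constructor
  · rintro ⟨⟨h1, _⟩, h3⟩
    have hc : u * v = v * u := Nat.mul_comm u v
    exact ⟨h1, (Nat.le_div_iff_mul_le hu).mpr (by omega)⟩
  · rintro ⟨h1, h2⟩
    have h3 : v * u ≤ M := (Nat.le_div_iff_mul_le hu).mp h2
    have h4 : 1 * 1 ≤ v * u := Nat.mul_le_mul h1 hu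
    have hc : u * v = v * u := Nat.mul_comm u v
    have h5 : v ≤ v * u := Nat.le_mul_of_pos_right v (by omega)
    exact ⟨⟨h1, by omega⟩, by omega⟩

lemma pair_collapse (M : ℕ) (F : ℕ → ℕ → ℝ) :
    ∑ p ∈ pairSet M, F p.1 p.2
      = ∑ u ∈ Finset.Icc 1 M, ∑ v ∈ Finset.Icc 1 (M / u), F u v := by
  rw [pairSet, Finset.sum_filter, Finset.sum_product]
  apply Finset.sum_congr rfl
  intro u hu
  rw [← Finset.sum_filter, icc_filter_mul M u (Finset.mem_Icc.mp hu).1]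

lemma sigma_collapse (M : ℕ) (F : ℕ → ℕ → ℝ) :
    ∑ n ∈ Finset.Icc 1 M, ∑ p ∈ n.divisorsAntidiagonal, F p.1 p.2
      = ∑ p ∈ pairSet M, F p.1 p.2 := by
  rw [← Finset.sum_sigma (Finset.Icc 1 M) (fun n => n.divisorsAntidiagonal)
    (fun q => F q.2.1 q.2.2)]
  apply Finset.sum_nbij' (fun q => q.2) (fun p => ⟨p.1 * p.2, p⟩)
  · rintro ⟨n, p⟩ hq
    simp only [Finset.mem_sigma, Finset.mem_Icc, Nat.mem_divisorsAntidiagonal] at hq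
    obtain ⟨⟨h1, h2⟩, hp, hn0⟩ := hq
    simp only [pairSet, Finset.mem_filter, Finset.mem_product, Finset.mem_Icc]
    have hp1 : 1 ≤ p.1 := Nat.pos_of_ne_zero (fun h0 => by rw [h0] at hp; simp at hp; omega)
    have hp2 : 1 ≤ p.2 := Nat.pos_of_ne_zero (fun h0 => by rw [h0] at hp; simp at hp; omega)
    have hle : p.1 * p.2 ≤ M := by rw [hp]; exact h2
    have h1M : p.1 ≤ M := le_trans (Nat.le_mul_of_pos_right _ hp2) hle
    have h2M : p.2 ≤ M := le_trans (Nat.le_mul_of_pos_left _ hp1) hle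
    exact ⟨⟨⟨hp1, h1M⟩, ⟨hp2, h2M⟩⟩, hle⟩
  · intro p hp
    simp only [pairSet, Finset.mem_filter, Finset.mem_product, Finset.mem_Icc] at hp
    obtain ⟨⟨⟨h1, _⟩, ⟨h2, _⟩⟩, hle⟩ := hp
    refine Finset.mem_sigma.mpr ⟨Finset.mem_Icc.mpr ⟨Nat.one_le_iff_ne_zero.mpr (by positivity), hle⟩, Nat.mem_divisorsAntidiagonal.mpr ⟨rfl, by positivity⟩⟩
  · rintro ⟨n, p⟩ hq
    simp only [Finset.mem_sigma, Nat.mem_divisorsAntidiagonal] at hq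
    obtain ⟨_, hp, _⟩ := hq
    simp [hp]
  · intro p _; rfl
  · intro q _; rfl

/-- h = 1 * chi4 -/
def hfun (n : ℕ) : ℝ := ∑ i ∈ n.divisors, chi4 i

def chiA : ArithmeticFunction ℝ := ⟨chi4, chi4_zero⟩

lemma chiA_apply (n : ℕ) : chiA n = chi4 n := rfl

lemma chiA_mult : chiA.IsMultiplicative :=
  ⟨chi4_one, fun {m n} _ => chi4_mul m n⟩

lemma hfun_nonneg (n : ℕ) : 0 ≤ hfun n := by
  rcases Nat.eq_zero_or_pos n with rfl | hn
  · simp [hfun]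
  have hn0 : n ≠ 0 := Nat.pos_iff_ne_zero.mp hn
  have hz : (ArithmeticFunction.zeta : ArithmeticFunction ℕ).IsMultiplicative :=
    ArithmeticFunction.isMultiplicative_zeta
  have hm : (chiA * (ArithmeticFunction.zeta : ArithmeticFunction ℕ)).IsMultiplicative :=
    chiA_mult.mul hz.natCast
  have heq : hfun n = (chiA * (ArithmeticFunction.zeta : ArithmeticFunction ℕ)) n := by
    rw [ArithmeticFunction.coe_mul_zeta_apply]; rfl
  rw [heq, ArithmeticFunction.IsMultiplicative.multiplicative_factorization _ hm hn0]
  rw [Finsupp.prod]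
  apply Finset.prod_nonneg
  intro p hp
  have hprime : p.Prime := Nat.prime_of_mem_primeFactors (by
    rwa [← Nat.support_factorization])
  set k := n.factorization p
  have : (chiA * (ArithmeticFunction.zeta : ArithmeticFunction ℕ)) (p ^ k)
      = ∑ i ∈ Finset.range (k+1), chi4 p ^ i := by
    rw [ArithmeticFunction.coe_mul_zeta_apply, Nat.sum_divisors_prime_pow hprime]
    exact Finset.sum_congr rfl (fun i _ => by rw [chiA_apply, chi4_pow])
  rw [this]
  rcases chi4_cases p with h | h | h <;> rw [h]
  · rw [Finset.sum_eq_single 0]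
    · norm_num
    · intro b _ hb; exact zero_pow hb
    · intro h0; simp at h0
  · apply Finset.sum_nonneg; intro i _; norm_num
  · rw [neg_one_geom_sum]; split_ifs <;> norm_num

lemma H_le (y : ℕ) : ∑ n ∈ Finset.Icc 1 y, hfun n ≤ (y : ℝ) := by
  have h1 : ∀ n : ℕ, hfun n = ∑ p ∈ n.divisorsAntidiagonal, chi4 p.1 := by
    intro n
    rw [Nat.sum_divisorsAntidiagonal (fun u v => chi4 u)]
    rfl
  calc ∑ n ∈ Finset.Icc 1 y, hfun n
      = ∑ p ∈ pairSet y, chi4 p.1 := by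
        rw [← sigma_collapse y (fun u v => chi4 u)]
        exact Finset.sum_congr rfl (fun n _ => h1 n)
    _ = ∑ u ∈ Finset.Icc 1 y, chi4 u * ((y / u : ℕ) : ℝ) := by
        rw [pair_collapse y (fun u v => chi4 u)]
        apply Finset.sum_congr rfl
        intro u _
        rw [Finset.sum_const, Nat.card_Icc]
        simp [nsmul_eq_mul, mul_comm]
    _ ≤ ((y / 1 : ℕ) : ℝ) := by
        apply abel_le (fun u => ((y / u : ℕ) : ℝ))
        · intro u _; positivity
        · intro u _
          exact_mod_cast Nat.cast_le.mpr (Nat.div_le_div_left (by omega) (by omega))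
    _ = (y : ℝ) := by norm_num





/-- the nonnegative convolution weight -/
def h2 (n : ℕ) : ℝ := ∑ p ∈ n.divisorsAntidiagonal, chi4 p.1 * chi4 p.2 ^ 2

lemma odd_of_dvd {d n : ℕ} (hd : d ∣ n) (hn : Odd n) : Odd d := by
  obtain ⟨k, rfl⟩ := hd
  exact (Nat.odd_mul.mp hn).1

lemma h2_eq_of_odd {n : ℕ} (hn : Odd n) : h2 n = hfun n := by
  rw [h2, Nat.sum_divisorsAntidiagonal (fun u v => chi4 u * chi4 v ^ 2), hfun]
  apply Finset.sum_congr rfl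
  intro i hi
  have hd : (n / i) ∣ n := Nat.div_dvd_of_dvd (Nat.mem_divisors.mp hi).1
  rw [chi4_sq_of_odd (odd_of_dvd hd hn), mul_one]

lemma h2_eq_zero_of_even {n : ℕ} (hn : ¬ Odd n) : h2 n = 0 := by
  rw [h2]
  apply Finset.sum_eq_zero
  intro p hp
  obtain ⟨hp1, hn0⟩ := Nat.mem_divisorsAntidiagonal.mp hp
  by_cases hv : Odd p.2
  · have hu : ¬ Odd p.1 := by
      intro hu
      exact hn (hp1 ▸ hu.mul hv)
    rw [chi4_of_even hu, zero_mul]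
  · rw [chi4_of_even hv]
    ring

lemma h2_nonneg (n : ℕ) : 0 ≤ h2 n := by
  by_cases hn : Odd n
  · rw [h2_eq_of_odd hn]; exact hfun_nonneg n
  · rw [h2_eq_zero_of_even hn]

lemma h2_le_hfun (n : ℕ) : h2 n ≤ hfun n := by
  by_cases hn : Odd n
  · rw [h2_eq_of_odd hn]
  · rw [h2_eq_zero_of_even hn]; exact hfun_nonneg n

lemma H2_le (z : ℕ) : ∑ n ∈ Finset.Icc 1 z, h2 n ≤ (z : ℝ) :=
  le_trans (Finset.sum_le_sum (fun n _ => h2_le_hfun n)) (H_le z)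





def TS (N : ℕ) : Finset (ℕ × ℕ × ℕ) :=
  (Finset.Icc 1 N ×ˢ Finset.Icc 1 N ×ˢ Finset.Icc 1 N).filter
    (fun t => Odd t.1 ∧ Odd t.2.1 ∧ Odd t.2.2 ∧
      Nat.Coprime t.1 t.2.1 ∧ Nat.Coprime t.1 t.2.2 ∧ Nat.Coprime t.2.1 t.2.2 ∧
      Squarefree (t.1 * t.2.1 * t.2.2) ∧ t.1 * t.2.1 * t.2.2 ≤ N)

lemma mem_TS {N : ℕ} {t : ℕ × ℕ × ℕ} : t ∈ TS N ↔
    (1 ≤ t.1 ∧ t.1 ≤ N) ∧ (1 ≤ t.2.1 ∧ t.2.1 ≤ N) ∧ (1 ≤ t.2.2 ∧ t.2.2 ≤ N) ∧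
    Odd t.1 ∧ Odd t.2.1 ∧ Odd t.2.2 ∧
    Nat.Coprime t.1 t.2.1 ∧ Nat.Coprime t.1 t.2.2 ∧ Nat.Coprime t.2.1 t.2.2 ∧
    Squarefree (t.1 * t.2.1 * t.2.2) ∧ t.1 * t.2.1 * t.2.2 ≤ N := by
  simp only [TS, Finset.mem_filter, Finset.mem_product, Finset.mem_Icc]
  tauto

lemma triple_sum_reorder (N : ℕ) (g : ℕ × ℕ × ℕ → ℝ) :
    ∑ t ∈ (Finset.Icc 1 N ×ˢ Finset.Icc 1 N ×ˢ Finset.Icc 1 N), g t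
      = ∑ c ∈ Finset.Icc 1 N, ∑ u ∈ Finset.Icc 1 N, ∑ v ∈ Finset.Icc 1 N, g (u, v, c) := by
  rw [Finset.sum_product]
  calc ∑ u ∈ Finset.Icc 1 N, ∑ y ∈ Finset.Icc 1 N ×ˢ Finset.Icc 1 N, g (u, y)
      = ∑ u ∈ Finset.Icc 1 N, ∑ v ∈ Finset.Icc 1 N, ∑ c ∈ Finset.Icc 1 N, g (u, v, c) := by
        apply Finset.sum_congr rfl; intro u _
        rw [Finset.sum_product]
    _ = ∑ u ∈ Finset.Icc 1 N, ∑ c ∈ Finset.Icc 1 N, ∑ v ∈ Finset.Icc 1 N, g (u, v, c) := by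
        apply Finset.sum_congr rfl; intro u _
        exact Finset.sum_comm
    _ = ∑ c ∈ Finset.Icc 1 N, ∑ u ∈ Finset.Icc 1 N, ∑ v ∈ Finset.Icc 1 N, g (u, v, c) :=
        Finset.sum_comm

def pairsK (N c : ℕ) : Finset (ℕ × ℕ) :=
  (Finset.Icc 1 N ×ˢ Finset.Icc 1 N).filter
    (fun p => Odd p.1 ∧ Odd p.2 ∧ Odd c ∧ Nat.Coprime p.1 p.2 ∧ Nat.Coprime p.1 c ∧
      Nat.Coprime p.2 c ∧ Squarefree (p.1 * p.2 * c) ∧ p.1 * p.2 * c ≤ N)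

lemma TS_decomp (N : ℕ) (w : ℕ → ℕ → ℕ → ℝ) :
    ∑ t ∈ TS N, w t.1 t.2.1 t.2.2
      = ∑ c ∈ Finset.Icc 1 N, ∑ p ∈ pairsK N c, w p.1 p.2 c := by
  rw [TS, Finset.sum_filter, triple_sum_reorder]
  apply Finset.sum_congr rfl; intro c _
  rw [pairsK, Finset.sum_filter, Finset.sum_product]

def nsetK (N c : ℕ) : Finset ℕ :=
  (Finset.Icc 1 N).filter
    (fun n => Odd n ∧ Odd c ∧ Nat.Coprime n c ∧ Squarefree (n * c) ∧ n * c ≤ N)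

lemma pairsK_sum (N c : ℕ) (hc : 1 ≤ c) :
    ∑ p ∈ pairsK N c, chi4 p.1 * chi4 p.2 ^ 2 = ∑ n ∈ nsetK N c, h2 n := by
  simp only [h2]
  rw [← Finset.sum_sigma (nsetK N c) (fun n => n.divisorsAntidiagonal)
    (fun q => chi4 q.2.1 * chi4 q.2.2 ^ 2)]
  apply Finset.sum_nbij' (i := fun (p : ℕ × ℕ) => (⟨p.1 * p.2, p⟩ : Σ _ : ℕ, ℕ × ℕ))
    (j := fun q => q.2)
  · intro p hp
    simp only [pairsK, Finset.mem_filter, Finset.mem_product, Finset.mem_Icc] at hp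
    obtain ⟨⟨⟨hu1, huN⟩, ⟨hv1, hvN⟩⟩, hou, hov, hoc, huv, huc, hvc, hsf, hle⟩ := hp
    apply Finset.mem_sigma.mpr
    constructor
    · simp only [nsetK, Finset.mem_filter, Finset.mem_Icc]
      have h1 : 1 ≤ p.1 * p.2 := Nat.one_le_iff_ne_zero.mpr (by positivity)
      have hle' : p.1 * p.2 * c ≤ N := hle
      have h2' : p.1 * p.2 ≤ N :=
        le_trans (Nat.le_mul_of_pos_right _ hc) hle'
      exact ⟨⟨h1, h2'⟩, hou.mul hov, hoc, Nat.Coprime.mul huc hvc, hsf, hle'⟩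
    · exact Nat.mem_divisorsAntidiagonal.mpr ⟨rfl, by positivity⟩
  · rintro ⟨n, p⟩ hq
    simp only [Finset.mem_sigma, nsetK, Finset.mem_filter, Finset.mem_Icc,
      Nat.mem_divisorsAntidiagonal] at hq
    obtain ⟨⟨⟨hn1, hnN⟩, hon, hoc, hnc, hsf, hle⟩, hp, hn0⟩ := hq
    simp only [pairsK, Finset.mem_filter, Finset.mem_product, Finset.mem_Icc]
    have hu_dvd : p.1 ∣ n := ⟨p.2, hp.symm⟩
    have hv_dvd : p.2 ∣ n := ⟨p.1, by rw [mul_comm]; exact hp.symm⟩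
    have hu1 : 1 ≤ p.1 := Nat.pos_of_ne_zero (fun h0 => by rw [h0] at hp; simp at hp; omega)
    have hv1 : 1 ≤ p.2 := Nat.pos_of_ne_zero (fun h0 => by rw [h0] at hp; simp at hp; omega)
    have huN : p.1 ≤ N := le_trans (Nat.le_of_dvd (by omega) hu_dvd) hnN
    have hvN : p.2 ≤ N := le_trans (Nat.le_of_dvd (by omega) hv_dvd) hnN
    have hsfn : Squarefree n := hsf.squarefree_of_dvd (dvd_mul_right n c)
    have hsfp : Squarefree (p.1 * p.2) := by rw [hp]; exact hsfn
    have huv : Nat.Coprime p.1 p.2 := (Nat.squarefree_mul_iff.mp hsfp).1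
    have huc : Nat.Coprime p.1 c := Nat.Coprime.coprime_dvd_left hu_dvd hnc
    have hvc : Nat.Coprime p.2 c := Nat.Coprime.coprime_dvd_left hv_dvd hnc
    have hsf2 : Squarefree (p.1 * p.2 * c) := by rw [hp]; exact hsf
    have hle2 : p.1 * p.2 * c ≤ N := by rw [hp]; exact hle
    exact ⟨⟨⟨hu1, huN⟩, ⟨hv1, hvN⟩⟩, odd_of_dvd hu_dvd hon, odd_of_dvd hv_dvd hon,
      hoc, huv, huc, hvc, hsf2, hle2⟩
  · intro p _; rfl
  · rintro ⟨n, p⟩ hq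
    simp only [Finset.mem_sigma, Nat.mem_divisorsAntidiagonal] at hq
    obtain ⟨_, hp, _⟩ := hq
    simp [hp]
  · intro p _; rfl

lemma harmonic_sum_le (N : ℕ) : ∑ c ∈ Finset.Icc 1 N, (1:ℝ)/c ≤ 1 + Real.log N := by
  have h : ∑ c ∈ Finset.Icc 1 N, (1:ℝ)/c = ((harmonic N : ℚ) : ℝ) := by
    rw [harmonic_eq_sum_Icc]
    push_cast
    apply Finset.sum_congr rfl
    intro i _
    rw [one_div]
  rw [h]
  exact_mod_cast harmonic_le_one_add_log N

lemma KA (N : ℕ) (b : ℕ → ℝ) (hb : ∀ n, |b n| ≤ 1) :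
    |∑ t ∈ TS N, chi4 t.1 * chi4 t.2.1 ^ 2 * b t.2.2| ≤ (N:ℝ) * (1 + Real.log N) := by
  rw [TS_decomp N (fun u v c => chi4 u * chi4 v ^ 2 * b c)]
  have key : ∀ c ∈ Finset.Icc 1 N,
      |∑ p ∈ pairsK N c, chi4 p.1 * chi4 p.2 ^ 2 * b c| ≤ (N:ℝ)/c := by
    intro c hcm
    obtain ⟨hc1, hcN⟩ := Finset.mem_Icc.mp hcm
    have hX : ∑ p ∈ pairsK N c, chi4 p.1 * chi4 p.2 ^ 2 * b c
        = (∑ n ∈ nsetK N c, h2 n) * b c := by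
      rw [← pairsK_sum N c hc1, Finset.sum_mul]
    have hXnn : 0 ≤ ∑ n ∈ nsetK N c, h2 n :=
      Finset.sum_nonneg (fun n _ => h2_nonneg n)
    have hXle : ∑ n ∈ nsetK N c, h2 n ≤ (N:ℝ)/c := by
      have hsub : nsetK N c ⊆ Finset.Icc 1 (N / c) := by
        intro n hn
        simp only [nsetK, Finset.mem_filter, Finset.mem_Icc] at hn
        obtain ⟨⟨hn1, _⟩, _, _, _, _, hle⟩ := hn
        exact Finset.mem_Icc.mpr ⟨hn1, (Nat.le_div_iff_mul_le hc1).mpr hle⟩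
      calc ∑ n ∈ nsetK N c, h2 n ≤ ∑ n ∈ Finset.Icc 1 (N / c), h2 n :=
            Finset.sum_le_sum_of_subset_of_nonneg hsub (fun n _ _ => h2_nonneg n)
        _ ≤ ((N / c : ℕ) : ℝ) := H2_le _
        _ ≤ (N:ℝ)/c := Nat.cast_div_le
    rw [hX, abs_mul]
    calc |∑ n ∈ nsetK N c, h2 n| * |b c| ≤ |∑ n ∈ nsetK N c, h2 n| * 1 :=
          mul_le_mul_of_nonneg_left (hb c) (abs_nonneg _)
      _ = ∑ n ∈ nsetK N c, h2 n := by rw [mul_one, abs_of_nonneg hXnn]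
      _ ≤ (N:ℝ)/c := hXle
  calc |∑ c ∈ Finset.Icc 1 N, ∑ p ∈ pairsK N c, chi4 p.1 * chi4 p.2 ^ 2 * b c|
      ≤ ∑ c ∈ Finset.Icc 1 N, |∑ p ∈ pairsK N c, chi4 p.1 * chi4 p.2 ^ 2 * b c| :=
        Finset.abs_sum_le_sum_abs _ _
    _ ≤ ∑ c ∈ Finset.Icc 1 N, (N:ℝ)/c := Finset.sum_le_sum key
    _ = (N:ℝ) * ∑ c ∈ Finset.Icc 1 N, (1:ℝ)/c := by
        rw [Finset.mul_sum]
        apply Finset.sum_congr rfl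
        intro c _; ring
    _ ≤ (N:ℝ) * (1 + Real.log N) := by
        apply mul_le_mul_of_nonneg_left (harmonic_sum_le N) (Nat.cast_nonneg N)






lemma TS_swap12 (N : ℕ) (F : ℕ → ℕ → ℕ → ℝ) :
    ∑ t ∈ TS N, F t.1 t.2.1 t.2.2 = ∑ t ∈ TS N, F t.2.1 t.1 t.2.2 := by
  apply Finset.sum_nbij' (i := fun t : ℕ × ℕ × ℕ => (t.2.1, t.1, t.2.2))
    (j := fun t : ℕ × ℕ × ℕ => (t.2.1, t.1, t.2.2))
  · intro t ht
    rw [mem_TS] at ht ⊢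
    obtain ⟨hb1, hb2, hb3, ho1, ho2, ho3, hc1, hc2, hc3, hsf, hle⟩ := ht
    have hm : t.2.1 * t.1 * t.2.2 = t.1 * t.2.1 * t.2.2 := by ring
    exact ⟨hb2, hb1, hb3, ho2, ho1, ho3, hc1.symm, hc3, hc2, by rw [hm]; exact hsf,
      by rw [hm]; exact hle⟩
  · intro t ht
    rw [mem_TS] at ht ⊢
    obtain ⟨hb1, hb2, hb3, ho1, ho2, ho3, hc1, hc2, hc3, hsf, hle⟩ := ht
    have hm : t.2.1 * t.1 * t.2.2 = t.1 * t.2.1 * t.2.2 := by ring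
    exact ⟨hb2, hb1, hb3, ho2, ho1, ho3, hc1.symm, hc3, hc2, by rw [hm]; exact hsf,
      by rw [hm]; exact hle⟩
  · intro t _; rfl
  · intro t _; rfl
  · intro t _; rfl

lemma TS_swap13 (N : ℕ) (F : ℕ → ℕ → ℕ → ℝ) :
    ∑ t ∈ TS N, F t.1 t.2.1 t.2.2 = ∑ t ∈ TS N, F t.2.2 t.2.1 t.1 := by
  apply Finset.sum_nbij' (i := fun t : ℕ × ℕ × ℕ => (t.2.2, t.2.1, t.1))
    (j := fun t : ℕ × ℕ × ℕ => (t.2.2, t.2.1, t.1))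
  · intro t ht
    rw [mem_TS] at ht ⊢
    obtain ⟨hb1, hb2, hb3, ho1, ho2, ho3, hc1, hc2, hc3, hsf, hle⟩ := ht
    have hm : t.2.2 * t.2.1 * t.1 = t.1 * t.2.1 * t.2.2 := by ring
    exact ⟨hb3, hb2, hb1, ho3, ho2, ho1, hc3.symm, hc2.symm, hc1.symm,
      by rw [hm]; exact hsf, by rw [hm]; exact hle⟩
  · intro t ht
    rw [mem_TS] at ht ⊢
    obtain ⟨hb1, hb2, hb3, ho1, ho2, ho3, hc1, hc2, hc3, hsf, hle⟩ := ht
    have hm : t.2.2 * t.2.1 * t.1 = t.1 * t.2.1 * t.2.2 := by ring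
    exact ⟨hb3, hb2, hb1, ho3, ho2, ho1, hc3.symm, hc2.symm, hc1.symm,
      by rw [hm]; exact hsf, by rw [hm]; exact hle⟩
  · intro t _; rfl
  · intro t _; rfl
  · intro t _; rfl

lemma TS_swap23 (N : ℕ) (F : ℕ → ℕ → ℕ → ℝ) :
    ∑ t ∈ TS N, F t.1 t.2.1 t.2.2 = ∑ t ∈ TS N, F t.1 t.2.2 t.2.1 := by
  apply Finset.sum_nbij' (i := fun t : ℕ × ℕ × ℕ => (t.1, t.2.2, t.2.1))
    (j := fun t : ℕ × ℕ × ℕ => (t.1, t.2.2, t.2.1))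
  · intro t ht
    rw [mem_TS] at ht ⊢
    obtain ⟨hb1, hb2, hb3, ho1, ho2, ho3, hc1, hc2, hc3, hsf, hle⟩ := ht
    have hm : t.1 * t.2.2 * t.2.1 = t.1 * t.2.1 * t.2.2 := by ring
    exact ⟨hb1, hb3, hb2, ho1, ho3, ho2, hc2, hc1, hc3.symm,
      by rw [hm]; exact hsf, by rw [hm]; exact hle⟩
  · intro t ht
    rw [mem_TS] at ht ⊢
    obtain ⟨hb1, hb2, hb3, ho1, ho2, ho3, hc1, hc2, hc3, hsf, hle⟩ := ht
    have hm : t.1 * t.2.2 * t.2.1 = t.1 * t.2.1 * t.2.2 := by ring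
    exact ⟨hb1, hb3, hb2, ho1, ho3, ho2, hc2, hc1, hc3.symm,
      by rw [hm]; exact hsf, by rw [hm]; exact hle⟩
  · intro t _; rfl
  · intro t _; rfl
  · intro t _; rfl





open ArithmeticFunction

lemma moebius_divisors_sum (k : ℕ) :
    ∑ e ∈ k.divisors, ((moebius e : ℤ) : ℝ) = if k = 1 then 1 else 0 := by
  have h : (moebius * (zeta : ArithmeticFunction ℤ)) k = (1 : ArithmeticFunction ℤ) k := by
    rw [moebius_mul_coe_zeta]
  rw [ArithmeticFunction.coe_mul_zeta_apply, ArithmeticFunction.one_apply] at h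
  calc ∑ e ∈ k.divisors, ((moebius e : ℤ) : ℝ)
      = ((∑ e ∈ k.divisors, moebius e : ℤ) : ℝ) := by push_cast; rfl
    _ = if k = 1 then 1 else 0 := by rw [h]; split_ifs <;> norm_num

lemma moebius_abs_le (e : ℕ) : |((moebius e : ℤ) : ℝ)| ≤ 1 := by
  by_cases h : Squarefree e
  · rw [moebius_apply_of_squarefree h]
    push_cast
    rw [abs_pow, abs_neg, abs_one, one_pow]
  · rw [moebius_eq_zero_of_not_squarefree h]; norm_num

lemma coprime_indicator (i k : ℕ) (hi : i ≠ 0) (hk : k ≠ 0) :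
    (if Nat.Coprime i k then (1:ℝ) else 0)
      = ∑ e ∈ k.divisors.filter (fun e => e ∣ i), ((moebius e : ℤ) : ℝ) := by
  have hset : k.divisors.filter (fun e => e ∣ i) = (Nat.gcd i k).divisors := by
    ext e
    simp only [Finset.mem_filter, Nat.mem_divisors]
    constructor
    · rintro ⟨⟨hek, _⟩, hei⟩
      exact ⟨Nat.dvd_gcd hei hek, fun h0 => hi (by simpa using (Nat.gcd_eq_zero_iff.mp h0).1)⟩
    · rintro ⟨he, _⟩
      have h1 := Nat.dvd_gcd_iff.mp he
      exact ⟨⟨h1.2, hk⟩, h1.1⟩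
  rw [hset, moebius_divisors_sum]

lemma sum_multiples (y e : ℕ) (he : 1 ≤ e) (f : ℕ → ℝ) :
    ∑ i ∈ (Finset.Icc 1 y).filter (fun i => e ∣ i), f i
      = ∑ j ∈ Finset.Icc 1 (y / e), f (e * j) := by
  apply Finset.sum_nbij' (i := fun i => i / e) (j := fun j => e * j)
  · intro i hi
    simp only [Finset.mem_filter, Finset.mem_Icc] at hi
    obtain ⟨⟨h1, h2⟩, hd⟩ := hi
    exact Finset.mem_Icc.mpr ⟨(Nat.one_le_div_iff (by omega)).mpr (Nat.le_of_dvd (by omega) hd),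
      Nat.div_le_div_right h2⟩
  · intro j hj
    obtain ⟨h1, h2⟩ := Finset.mem_Icc.mp hj
    simp only [Finset.mem_filter, Finset.mem_Icc]
    have hej : 1 * 1 ≤ e * j := Nat.mul_le_mul he h1
    refine ⟨⟨by omega, ?_⟩, Dvd.intro _ rfl⟩
    have h3 := (Nat.le_div_iff_mul_le (by omega : 0 < e)).mp h2
    have hc : e * j = j * e := Nat.mul_comm e j
    omega
  · intro i hi
    simp only [Finset.mem_filter] at hi
    exact Nat.mul_div_cancel' hi.2
  · intro j _
    exact Nat.mul_div_cancel_left j (by omega)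
  · intro i hi
    simp only [Finset.mem_filter] at hi
    rw [Nat.mul_div_cancel' hi.2]

def U (y k : ℕ) : ℝ := ∑ i ∈ (Finset.Icc 1 y).filter (fun i => Nat.Coprime i k), chi4 i

lemma U_abs_le (y k : ℕ) (hk : k ≠ 0) : |U y k| ≤ (k.divisors.card : ℝ) := by
  have h1 : U y k = ∑ i ∈ Finset.Icc 1 y, (if Nat.Coprime i k then (1:ℝ) else 0) * chi4 i := by
    rw [U, Finset.sum_filter]
    apply Finset.sum_congr rfl
    intro i _
    split_ifs <;> simp
  have h2 : ∀ i ∈ Finset.Icc 1 y, (if Nat.Coprime i k then (1:ℝ) else 0) * chi4 i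
      = ∑ e ∈ k.divisors, (if e ∣ i then ((moebius e : ℤ):ℝ) * chi4 i else 0) := by
    intro i hi
    obtain ⟨hi1, _⟩ := Finset.mem_Icc.mp hi
    rw [coprime_indicator i k (by omega) hk, Finset.sum_filter, Finset.sum_mul]
    apply Finset.sum_congr rfl
    intro e _
    rw [ite_mul, zero_mul]
  rw [h1, Finset.sum_congr rfl h2, Finset.sum_comm]
  have h3 : ∀ e ∈ k.divisors,
      |∑ i ∈ Finset.Icc 1 y, (if e ∣ i then ((moebius e : ℤ):ℝ) * chi4 i else 0)| ≤ 1 := by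
    intro e he
    have he1 : 1 ≤ e := Nat.pos_of_mem_divisors he
    rw [← Finset.sum_filter]
    rw [sum_multiples y e he1 (fun i => ((moebius e : ℤ):ℝ) * chi4 i)]
    have : ∑ j ∈ Finset.Icc 1 (y / e), ((moebius e : ℤ):ℝ) * chi4 (e * j)
        = ((moebius e : ℤ):ℝ) * chi4 e * ∑ j ∈ Finset.Icc 1 (y / e), chi4 j := by
      rw [Finset.mul_sum]
      apply Finset.sum_congr rfl
      intro j _
      rw [chi4_mul]; ring
    rw [this, abs_mul, abs_mul]
    calc |((moebius e : ℤ):ℝ)| * |chi4 e| * |∑ j ∈ Finset.Icc 1 (y / e), chi4 j|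
        ≤ 1 * 1 * 1 := by
          apply mul_le_mul (mul_le_mul (moebius_abs_le e) (chi4_abs_le e)
            (abs_nonneg _) (by norm_num)) (P_abs_le _) (abs_nonneg _) (by norm_num)
      _ = 1 := by norm_num
  calc |∑ e ∈ k.divisors, ∑ i ∈ Finset.Icc 1 y,
        (if e ∣ i then ((moebius e : ℤ):ℝ) * chi4 i else 0)|
      ≤ ∑ e ∈ k.divisors, |∑ i ∈ Finset.Icc 1 y,
        (if e ∣ i then ((moebius e : ℤ):ℝ) * chi4 i else 0)| := Finset.abs_sum_le_sum_abs _ _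
    _ ≤ ∑ _e ∈ k.divisors, (1:ℝ) := Finset.sum_le_sum h3
    _ = (k.divisors.card : ℝ) := by rw [Finset.sum_const]; simp




open ArithmeticFunction


/-- the square-root core of n : largest s with s^2 ∣ n -/
def Jr (n : ℕ) : ℕ := n.factorization.prod fun p k => p ^ (k / 2)

lemma Jr_pos (n : ℕ) : 0 < Jr n := by
  rw [Jr, Finsupp.prod]
  apply Finset.prod_pos
  intro p hp
  have hprime : p.Prime := Nat.prime_of_mem_primeFactors (by rwa [← Nat.support_factorization])
  exact pow_pos hprime.pos _

lemma Jr_factorization (n : ℕ) (hn : n ≠ 0) (q : ℕ) :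
    (Jr n).factorization q = n.factorization q / 2 := by
  have hne : ∀ p ∈ n.factorization.support, p ^ (n.factorization p / 2) ≠ 0 := by
    intro p hp
    have hprime : p.Prime := Nat.prime_of_mem_primeFactors (by rwa [← Nat.support_factorization])
    exact pow_ne_zero _ hprime.pos.ne'
  rw [Jr, Finsupp.prod, Nat.factorization_prod hne]
  rw [Finset.sum_apply']
  have heach : ∀ p ∈ n.factorization.support,
      (p ^ (n.factorization p / 2)).factorization q
        = if p = q then n.factorization p / 2 else 0 := by
    intro p hp
    have hprime : p.Prime := Nat.prime_of_mem_primeFactors (by rwa [← Nat.support_factorization])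
    rw [hprime.factorization_pow, Finsupp.single_apply]
  rw [Finset.sum_congr rfl heach, Finset.sum_ite_eq' _ q (fun p => n.factorization p / 2)]
  split_ifs with hq
  · rfl
  · rw [Finsupp.notMem_support_iff.mp hq]
    simp

lemma sq_dvd_iff_dvd_Jr (n d : ℕ) (hn : n ≠ 0) (hd : d ≠ 0) :
    d ^ 2 ∣ n ↔ d ∣ Jr n := by
  rw [← Nat.factorization_le_iff_dvd hd (Jr_pos n).ne', ← Nat.factorization_le_iff_dvd
    (pow_ne_zero 2 hd) hn, Nat.factorization_pow]
  constructor
  · intro h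
    intro q
    have hq := h q
    rw [Finsupp.smul_apply, smul_eq_mul] at hq
    rw [Jr_factorization n hn q]
    omega
  · intro h
    intro q
    have hq := h q
    rw [Jr_factorization n hn q] at hq
    rw [Finsupp.smul_apply, smul_eq_mul]
    omega

lemma Jr_eq_one_iff (n : ℕ) (hn : n ≠ 0) : Jr n = 1 ↔ Squarefree n := by
  rw [Nat.squarefree_iff_factorization_le_one hn]
  constructor
  · intro h1 p
    by_contra hp
    push_neg at hp
    have hJ := Jr_factorization n hn p
    rw [h1] at hJ
    simp only [Nat.factorization_one, Finsupp.coe_zero, Pi.zero_apply] at hJ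
    omega
  · intro h
    rw [Jr, Finsupp.prod]
    apply Finset.prod_eq_one
    intro p hp
    have h1 : n.factorization p ≤ 1 := h p
    have h0 : n.factorization p / 2 = 0 := by omega
    rw [h0, pow_zero]

lemma sf_indicator (n : ℕ) (hn : 1 ≤ n) (x : ℕ) (hx : n ≤ x) :
    (if Squarefree n then (1:ℝ) else 0)
      = ∑ d ∈ (Finset.Icc 1 x).filter (fun d => d ^ 2 ∣ n), ((moebius d : ℤ) : ℝ) := by
  have hn0 : n ≠ 0 := by omega
  have hset : (Finset.Icc 1 x).filter (fun d => d ^ 2 ∣ n) = (Jr n).divisors := by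
    ext d
    simp only [Finset.mem_filter, Finset.mem_Icc, Nat.mem_divisors]
    constructor
    · rintro ⟨⟨h1, h2⟩, hd⟩
      exact ⟨(sq_dvd_iff_dvd_Jr n d hn0 (by omega)).mp hd, (Jr_pos n).ne'⟩
    · rintro ⟨hd, hJ⟩
      have hd0 : d ≠ 0 := by
        rintro rfl
        exact hJ (Nat.eq_zero_of_zero_dvd hd)
      have hsq := (sq_dvd_iff_dvd_Jr n d hn0 hd0).mpr hd
      have hdn : d ∣ n := dvd_trans (dvd_pow_self d two_ne_zero) hsq
      exact ⟨⟨by omega, le_trans (Nat.le_of_dvd (by omega) hdn) hx⟩, hsq⟩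
  rw [hset, moebius_divisors_sum]
  exact if_congr (Jr_eq_one_iff n hn0).symm rfl rfl

def Tf (x k : ℕ) : ℝ :=
  ∑ a ∈ (Finset.Icc 1 x).filter (fun a => Squarefree a ∧ Nat.Coprime a k), chi4 a

lemma Tf_abs_le (x k : ℕ) (hk : k ≠ 0) :
    |Tf x k| ≤ Real.sqrt x * (k.divisors.card : ℝ) := by
  have h1 : Tf x k = ∑ a ∈ Finset.Icc 1 x, ∑ d ∈ Finset.Icc 1 x,
      (if d ^ 2 ∣ a ∧ Nat.Coprime a k then ((moebius d : ℤ):ℝ) * chi4 a else 0) := by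
    rw [Tf, Finset.sum_filter]
    apply Finset.sum_congr rfl
    intro a ha
    obtain ⟨ha1, hax⟩ := Finset.mem_Icc.mp ha
    by_cases hcop : Nat.Coprime a k
    · rw [if_congr (show (Squarefree a ∧ Nat.Coprime a k) ↔ Squarefree a by tauto) rfl rfl]
      have : (if Squarefree a then chi4 a else 0)
          = (if Squarefree a then (1:ℝ) else 0) * chi4 a := by split_ifs <;> simp
      rw [this, sf_indicator a ha1 x hax, Finset.sum_mul, Finset.sum_filter]
      apply Finset.sum_congr rfl
      intro d _
      split_ifs <;> first | rfl | tauto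
    · rw [if_neg (by tauto)]
      symm
      apply Finset.sum_eq_zero
      intro d _
      rw [if_neg (by tauto)]
  rw [h1, Finset.sum_comm]
  have key : ∀ d ∈ Finset.Icc 1 x,
      |∑ a ∈ Finset.Icc 1 x, (if d ^ 2 ∣ a ∧ Nat.Coprime a k
          then ((moebius d : ℤ):ℝ) * chi4 a else 0)|
        ≤ (if d ^ 2 ≤ x then (k.divisors.card : ℝ) else 0) := by
    intro d hd
    obtain ⟨hd1, hdx⟩ := Finset.mem_Icc.mp hd
    have hstep : ∑ a ∈ Finset.Icc 1 x, (if d ^ 2 ∣ a ∧ Nat.Coprime a k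
          then ((moebius d : ℤ):ℝ) * chi4 a else 0)
        = ∑ a ∈ (Finset.Icc 1 x).filter (fun a => d ^ 2 ∣ a),
            (if Nat.Coprime a k then ((moebius d : ℤ):ℝ) * chi4 a else 0) := by
      rw [Finset.sum_filter]
      apply Finset.sum_congr rfl
      intro a _
      split_ifs <;> first | rfl | tauto
    rw [hstep, sum_multiples x (d ^ 2) (Nat.one_le_pow _ _ (by omega))
      (fun a => if Nat.Coprime a k then ((moebius d : ℤ):ℝ) * chi4 a else 0)]
    by_cases hsq : d ^ 2 ≤ x
    · rw [if_pos hsq]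
      by_cases hcop : Nat.Coprime d k
      · have hterm : ∀ j, (if Nat.Coprime (d ^ 2 * j) k
            then ((moebius d : ℤ):ℝ) * chi4 (d ^ 2 * j) else 0)
            = ((moebius d : ℤ):ℝ) * chi4 (d ^ 2) *
                (if Nat.Coprime j k then chi4 j else 0) := by
          intro j
          by_cases hj : Nat.Coprime j k
          · rw [if_pos hj, if_pos (Nat.Coprime.mul (hcop.pow_left 2) hj), chi4_mul]
            ring
          · rw [if_neg hj, if_neg (fun hco => hj
              (Nat.Coprime.coprime_dvd_left (dvd_mul_left j (d ^ 2)) hco)), mul_zero]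
        calc |∑ j ∈ Finset.Icc 1 (x / d ^ 2), (if Nat.Coprime (d ^ 2 * j) k
              then ((moebius d : ℤ):ℝ) * chi4 (d ^ 2 * j) else 0)|
            = |((moebius d : ℤ):ℝ) * chi4 (d ^ 2) * U (x / d ^ 2) k| := by
              rw [Finset.sum_congr rfl (fun j _ => hterm j), ← Finset.mul_sum, U,
                Finset.sum_filter]
          _ ≤ 1 * 1 * (k.divisors.card : ℝ) := by
              rw [abs_mul, abs_mul]
              apply mul_le_mul (mul_le_mul (moebius_abs_le d) (chi4_abs_le _)
                (abs_nonneg _) (by norm_num)) (U_abs_le _ _ hk) (abs_nonneg _) (by norm_num)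
          _ = (k.divisors.card : ℝ) := by norm_num
      · have hzero : ∀ j ∈ Finset.Icc 1 (x / d ^ 2), (if Nat.Coprime (d ^ 2 * j) k
            then ((moebius d : ℤ):ℝ) * chi4 (d ^ 2 * j) else 0) = 0 := by
          intro j _
          rw [if_neg]
          intro hco
          exact hcop (Nat.Coprime.coprime_dvd_left
            (dvd_mul_of_dvd_left (dvd_pow_self d two_ne_zero) j) hco)
        rw [Finset.sum_eq_zero hzero, abs_zero]
        positivity
    · rw [if_neg hsq]
      have hdiv : x / d ^ 2 = 0 := Nat.div_eq_of_lt (by omega)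
      rw [hdiv]
      simp
  calc |∑ d ∈ Finset.Icc 1 x, ∑ a ∈ Finset.Icc 1 x, (if d ^ 2 ∣ a ∧ Nat.Coprime a k
        then ((moebius d : ℤ):ℝ) * chi4 a else 0)|
      ≤ ∑ d ∈ Finset.Icc 1 x, |∑ a ∈ Finset.Icc 1 x, (if d ^ 2 ∣ a ∧ Nat.Coprime a k
        then ((moebius d : ℤ):ℝ) * chi4 a else 0)| := Finset.abs_sum_le_sum_abs _ _
    _ ≤ ∑ d ∈ Finset.Icc 1 x, (if d ^ 2 ≤ x then (k.divisors.card : ℝ) else 0) :=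
        Finset.sum_le_sum key
    _ = (Nat.sqrt x : ℝ) * (k.divisors.card : ℝ) := by
        rw [← Finset.sum_filter]
        rw [show (Finset.Icc 1 x).filter (fun d => d ^ 2 ≤ x) = Finset.Icc 1 (Nat.sqrt x) by
          ext d
          simp only [Finset.mem_filter, Finset.mem_Icc]
          constructor
          · rintro ⟨⟨h1, _⟩, h2⟩
            exact ⟨h1, Nat.le_sqrt'.mpr h2⟩
          · rintro ⟨h1, h2⟩
            have h3 := Nat.le_sqrt'.mp h2
            exact ⟨⟨h1, le_trans h2 (Nat.sqrt_le_self x)⟩, h3⟩]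
        rw [Finset.sum_const, Nat.card_Icc]
        simp [nsmul_eq_mul]
    _ ≤ Real.sqrt x * (k.divisors.card : ℝ) := by
        apply mul_le_mul_of_nonneg_right _ (Nat.cast_nonneg _)
        have h2 : ((Nat.sqrt x : ℝ)) ^ 2 ≤ (x : ℝ) := by
          exact_mod_cast Nat.sqrt_le' x
        calc (Nat.sqrt x : ℝ) = Real.sqrt ((Nat.sqrt x : ℝ) ^ 2) := by
              rw [Real.sqrt_sq (Nat.cast_nonneg _)]
          _ ≤ Real.sqrt x := Real.sqrt_le_sqrt h2

lemma T_interval (lo hi k : ℕ) (hk : k ≠ 0) (hlo : 1 ≤ lo) :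
    |∑ a ∈ (Finset.Icc lo hi).filter (fun a => Squarefree a ∧ Nat.Coprime a k), chi4 a|
      ≤ 2 * Real.sqrt hi * (k.divisors.card : ℝ) := by
  by_cases hbound : lo ≤ hi
  · have hsplit : Finset.Icc 1 hi = Finset.Icc 1 (lo - 1) ∪ Finset.Icc lo hi := by
      ext a
      simp only [Finset.mem_union, Finset.mem_Icc]
      omega
    have hdisj : Disjoint ((Finset.Icc 1 (lo - 1)).filter
        (fun a => Squarefree a ∧ Nat.Coprime a k))
        ((Finset.Icc lo hi).filter (fun a => Squarefree a ∧ Nat.Coprime a k)) := by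
      apply Finset.disjoint_filter_filter
      rw [Finset.disjoint_left]
      intro a h1 h2
      rw [Finset.mem_Icc] at h1 h2
      omega
    have hTf : Tf hi k = Tf (lo - 1) k
        + ∑ a ∈ (Finset.Icc lo hi).filter (fun a => Squarefree a ∧ Nat.Coprime a k), chi4 a := by
      rw [Tf, hsplit, Finset.filter_union, Finset.sum_union hdisj, Tf]
    have heq : ∑ a ∈ (Finset.Icc lo hi).filter (fun a => Squarefree a ∧ Nat.Coprime a k), chi4 a
        = Tf hi k - Tf (lo - 1) k := by rw [hTf]; ring
    rw [heq]
    have hle1 := Tf_abs_le hi k hk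
    have hle2 := Tf_abs_le (lo - 1) k hk
    have hmono : Real.sqrt (lo - 1 : ℕ) ≤ Real.sqrt hi := by
      apply Real.sqrt_le_sqrt
      exact_mod_cast Nat.cast_le.mpr (by omega : (lo - 1 : ℕ) ≤ hi)
    calc |Tf hi k - Tf (lo - 1) k| ≤ |Tf hi k| + |Tf (lo - 1) k| := abs_sub _ _
      _ ≤ Real.sqrt hi * (k.divisors.card : ℝ) + Real.sqrt (lo - 1 : ℕ) * (k.divisors.card : ℝ) :=
          add_le_add hle1 hle2
      _ ≤ 2 * Real.sqrt hi * (k.divisors.card : ℝ) := by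
          have : Real.sqrt (lo - 1 : ℕ) * (k.divisors.card : ℝ)
              ≤ Real.sqrt hi * (k.divisors.card : ℝ) :=
            mul_le_mul_of_nonneg_right hmono (Nat.cast_nonneg _)
          linarith
  · rw [Finset.Icc_eq_empty (by omega)]
    simp only [Finset.filter_empty, Finset.sum_empty, abs_zero]
    positivity






lemma log_nat_nonneg (n : ℕ) : 0 ≤ Real.log n := by
  rcases Nat.eq_zero_or_pos n with rfl | hn
  · simp
  · apply Real.log_nonneg
    exact_mod_cast hn

lemma log_nat_mono {a b : ℕ} (h : a ≤ b) : Real.log a ≤ Real.log b := by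
  rcases Nat.eq_zero_or_pos a with rfl | ha
  · simpa using log_nat_nonneg b
  · apply Real.log_le_log (by exact_mod_cast ha)
    exact_mod_cast h

lemma one_add_log_nonneg (n : ℕ) : 0 ≤ 1 + Real.log n := by
  linarith [log_nat_nonneg n]

/-- τ(c)/c sum bound -/
lemma tau_div_sum_le (z : ℕ) :
    ∑ c ∈ Finset.Icc 1 z, (c.divisors.card : ℝ) / c ≤ (1 + Real.log z) ^ 2 := by
  have hcard : ∀ c : ℕ, ((c.divisorsAntidiagonal.card : ℝ)) = (c.divisors.card : ℝ) := by
    intro c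
    have h2 : ∑ p ∈ c.divisorsAntidiagonal, (1:ℝ) = ∑ _i ∈ c.divisors, (1:ℝ) :=
      Nat.sum_divisorsAntidiagonal (fun (_u _v : ℕ) => (1:ℝ))
    simpa using h2
  have e1 : ∀ c ∈ Finset.Icc 1 z, (c.divisors.card : ℝ) / c
      = ∑ p ∈ c.divisorsAntidiagonal, (1:ℝ) / (p.1 * p.2) := by
    intro c hc
    have hc1 : 1 ≤ c := (Finset.mem_Icc.mp hc).1
    have hterm : ∀ p ∈ c.divisorsAntidiagonal, (1:ℝ) / (p.1 * p.2) = 1 / c := by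
      intro p hp
      obtain ⟨hp1, _⟩ := Nat.mem_divisorsAntidiagonal.mp hp
      rw [show ((p.1 : ℝ) * p.2) = ((p.1 * p.2 : ℕ) : ℝ) by push_cast; ring, hp1]
    rw [Finset.sum_congr rfl hterm, Finset.sum_const, nsmul_eq_mul, hcard c]
    ring
  rw [Finset.sum_congr rfl e1, sigma_collapse z (fun u v => (1:ℝ)/(u * v)),
    pair_collapse z (fun u v => (1:ℝ)/(u * v))]
  have inner_le : ∀ u ∈ Finset.Icc 1 z,
      ∑ v ∈ Finset.Icc 1 (z / u), (1:ℝ)/(u * v) ≤ (1/u) * (1 + Real.log z) := by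
    intro u hu
    have hu1 : 1 ≤ u := (Finset.mem_Icc.mp hu).1
    have h1 : ∑ v ∈ Finset.Icc 1 (z / u), (1:ℝ)/(u * v)
        = (1/u) * ∑ v ∈ Finset.Icc 1 (z / u), (1:ℝ)/v := by
      rw [Finset.mul_sum]
      apply Finset.sum_congr rfl
      intro v _
      rw [one_div, one_div, one_div, mul_inv]
    rw [h1]
    apply mul_le_mul_of_nonneg_left _ (by positivity)
    calc ∑ v ∈ Finset.Icc 1 (z / u), (1:ℝ)/v ≤ 1 + Real.log (z / u : ℕ) :=
          harmonic_sum_le (z / u)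
      _ ≤ 1 + Real.log z := by linarith [log_nat_mono (Nat.div_le_self z u)]
  calc ∑ u ∈ Finset.Icc 1 z, ∑ v ∈ Finset.Icc 1 (z / u), (1:ℝ)/(u * v)
      ≤ ∑ u ∈ Finset.Icc 1 z, (1/u) * (1 + Real.log z) := Finset.sum_le_sum inner_le
    _ = (∑ u ∈ Finset.Icc 1 z, (1:ℝ)/u) * (1 + Real.log z) := by rw [Finset.sum_mul]
    _ ≤ (1 + Real.log z) * (1 + Real.log z) := by
        apply mul_le_mul_of_nonneg_right (harmonic_sum_le z) (one_add_log_nonneg z)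
    _ = (1 + Real.log z) ^ 2 := by ring

/-- the quadruple divisor sum bound -/
lemma W_le (N : ℕ) :
    ∑ p ∈ pairSet N, ((p.1.divisors.card : ℝ) * (p.2.divisors.card : ℝ)) / (p.1 * p.2)
      ≤ (1 + Real.log N) ^ 4 := by
  rw [pair_collapse N (fun u v => ((u.divisors.card : ℝ) * (v.divisors.card : ℝ)) / (u * v))]
  have inner_le : ∀ u ∈ Finset.Icc 1 N,
      ∑ v ∈ Finset.Icc 1 (N / u), ((u.divisors.card : ℝ) * (v.divisors.card : ℝ)) / (u * v)
        ≤ ((u.divisors.card : ℝ)/u) * (1 + Real.log N) ^ 2 := by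
    intro u hu
    have h1 : ∑ v ∈ Finset.Icc 1 (N / u), ((u.divisors.card : ℝ) * (v.divisors.card : ℝ)) / (u * v)
        = ((u.divisors.card : ℝ)/u) * ∑ v ∈ Finset.Icc 1 (N / u), (v.divisors.card : ℝ)/v := by
      rw [Finset.mul_sum]
      apply Finset.sum_congr rfl
      intro v _
      field_simp
    rw [h1]
    apply mul_le_mul_of_nonneg_left _ (by positivity)
    calc ∑ v ∈ Finset.Icc 1 (N / u), (v.divisors.card : ℝ)/v
        ≤ (1 + Real.log (N / u : ℕ)) ^ 2 := tau_div_sum_le (N / u)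
      _ ≤ (1 + Real.log N) ^ 2 := by
          have h2 := log_nat_mono (Nat.div_le_self N u)
          have h3 := one_add_log_nonneg (N / u)
          nlinarith
  calc ∑ u ∈ Finset.Icc 1 N,
        ∑ v ∈ Finset.Icc 1 (N / u), ((u.divisors.card : ℝ) * (v.divisors.card : ℝ)) / (u * v)
      ≤ ∑ u ∈ Finset.Icc 1 N, ((u.divisors.card : ℝ)/u) * (1 + Real.log N) ^ 2 :=
        Finset.sum_le_sum inner_le
    _ = (∑ u ∈ Finset.Icc 1 N, (u.divisors.card : ℝ)/u) * (1 + Real.log N) ^ 2 := by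
        rw [Finset.sum_mul]
    _ ≤ (1 + Real.log N) ^ 2 * (1 + Real.log N) ^ 2 := by
        apply mul_le_mul_of_nonneg_right (tau_div_sum_le N) (by positivity)
    _ = (1 + Real.log N) ^ 4 := by ring









/-- inner a-variable set -/
def aset (N b c i₁ i₂ : ℕ) : Finset ℕ :=
  (Finset.Icc 1 N).filter (fun a => Odd a ∧ Odd b ∧ Odd c ∧ Nat.Coprime a b ∧
    Nat.Coprime a c ∧ Nat.Coprime b c ∧ Squarefree (a * b * c) ∧ a * b * c ≤ N ∧
    b + i₁ ≤ a ∧ c + i₂ ≤ a)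

lemma TS_decomp_first (N i₁ i₂ : ℕ) :
    ∑ t ∈ TS N, chi4 t.1 * chi4 t.2.1 * chi4 t.2.2 *
        (if t.2.1 + i₁ ≤ t.1 ∧ t.2.2 + i₂ ≤ t.1 then 1 else 0)
      = ∑ b ∈ Finset.Icc 1 N, ∑ c ∈ Finset.Icc 1 N,
          chi4 b * chi4 c * ∑ a ∈ aset N b c i₁ i₂, chi4 a := by
  rw [TS, Finset.sum_filter, Finset.sum_product]
  have h0 : ∀ u ∈ Finset.Icc 1 N,
      (∑ y ∈ Finset.Icc 1 N ×ˢ Finset.Icc 1 N,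
        (if Odd (u, y).1 ∧ Odd (u, y).2.1 ∧ Odd (u, y).2.2 ∧
            Nat.Coprime (u, y).1 (u, y).2.1 ∧ Nat.Coprime (u, y).1 (u, y).2.2 ∧
            Nat.Coprime (u, y).2.1 (u, y).2.2 ∧
            Squarefree ((u, y).1 * (u, y).2.1 * (u, y).2.2) ∧
            (u, y).1 * (u, y).2.1 * (u, y).2.2 ≤ N
          then chi4 (u, y).1 * chi4 (u, y).2.1 * chi4 (u, y).2.2 *
            (if (u, y).2.1 + i₁ ≤ (u, y).1 ∧ (u, y).2.2 + i₂ ≤ (u, y).1 then 1 else 0)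
          else 0))
      = ∑ b ∈ Finset.Icc 1 N, ∑ c ∈ Finset.Icc 1 N,
          (if Odd u ∧ Odd b ∧ Odd c ∧ Nat.Coprime u b ∧ Nat.Coprime u c ∧
            Nat.Coprime b c ∧ Squarefree (u * b * c) ∧ u * b * c ≤ N
          then chi4 u * chi4 b * chi4 c * (if b + i₁ ≤ u ∧ c + i₂ ≤ u then 1 else 0)
          else 0) := by
    intro u _
    rw [Finset.sum_product]
  rw [Finset.sum_congr rfl h0]
  rw [Finset.sum_comm]
  apply Finset.sum_congr rfl
  intro b _
  rw [Finset.sum_comm]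
  apply Finset.sum_congr rfl
  intro c _
  rw [Finset.mul_sum, aset, Finset.sum_filter]
  apply Finset.sum_congr rfl
  intro a _
  by_cases h : Odd a ∧ Odd b ∧ Odd c ∧ Nat.Coprime a b ∧ Nat.Coprime a c ∧
      Nat.Coprime b c ∧ Squarefree (a * b * c) ∧ a * b * c ≤ N
  · by_cases h2 : b + i₁ ≤ a ∧ c + i₂ ≤ a
    · rw [if_pos h, if_pos h2, if_pos (by tauto)]
      ring
    · rw [if_pos h, if_neg h2, if_neg (by tauto)]
      ring
  · rw [if_neg h, if_neg (by tauto)]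

lemma aset_empty_of_large (N b c i₁ i₂ : ℕ) (hbig : ¬ (b * c) ^ 3 ≤ N ^ 2) :
    aset N b c i₁ i₂ = ∅ := by
  rw [Finset.eq_empty_iff_forall_notMem]
  intro a ha
  simp only [aset, Finset.mem_filter, Finset.mem_Icc] at ha
  obtain ⟨⟨ha1, haN⟩, _, _, _, _, _, _, _, hle, hba, hca⟩ := ha
  apply hbig
  have h1 : b * c ≤ a * a := Nat.mul_le_mul (by omega) (by omega)
  calc (b * c) ^ 3 = (b * c) ^ 2 * (b * c) := by ring
    _ ≤ (b * c) ^ 2 * (a * a) := Nat.mul_le_mul_left _ h1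
    _ = (a * b * c) ^ 2 := by ring
    _ ≤ N ^ 2 := Nat.pow_le_pow_left hle 2

lemma inner_bound (N b c i₁ i₂ : ℕ) (hb : 1 ≤ b) (hc : 1 ≤ c) :
    |∑ a ∈ aset N b c i₁ i₂, chi4 a|
      ≤ if (b * c) ^ 3 ≤ N ^ 2
          then 2 * Real.sqrt ((N / (b * c) : ℕ)) * ((b.divisors.card : ℝ) * c.divisors.card)
          else 0 := by
  by_cases hbig : (b * c) ^ 3 ≤ N ^ 2
  swap
  · rw [if_neg hbig, aset_empty_of_large N b c i₁ i₂ hbig]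
    simp
  rw [if_pos hbig]
  by_cases hgood : Odd b ∧ Odd c ∧ Nat.Coprime b c ∧ Squarefree (b * c)
  swap
  · have hempty : aset N b c i₁ i₂ = ∅ := by
      rw [Finset.eq_empty_iff_forall_notMem]
      intro a ha
      simp only [aset, Finset.mem_filter, Finset.mem_Icc] at ha
      obtain ⟨_, _, hob, hoc, _, _, hcbc, hsf, _, _, _⟩ := ha
      have hsfbc : Squarefree (b * c) := by
        apply hsf.squarefree_of_dvd
        have : a * b * c = (b * c) * a := by ring
        rw [this]
        exact dvd_mul_right _ _
      exact hgood ⟨hob, hoc, hcbc, hsfbc⟩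
    rw [hempty]
    simp
    positivity
  obtain ⟨hob, hoc, hcbc, hsfbc⟩ := hgood
  have hbc1 : 1 ≤ b * c := Nat.mul_le_mul hb hc
  set lo := max (b + i₁) (c + i₂) with hlo_def
  set hi := N / (b * c) with hhi_def
  have hset : aset N b c i₁ i₂
      = ((Finset.Icc lo hi).filter (fun a => Squarefree a ∧ Nat.Coprime a (b * c))).filter
          (fun a => Odd a) := by
    ext a
    simp only [aset, Finset.mem_filter, Finset.mem_Icc]
    constructor
    · rintro ⟨⟨ha1, haN⟩, hoa, _, _, hab, hac, _, hsf, hle, hba, hca⟩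
      have hsfa : Squarefree a := by
        apply hsf.squarefree_of_dvd
        have : a * b * c = a * (b * c) := by ring
        rw [this]
        exact dvd_mul_right _ _
      have habc : Nat.Coprime a (b * c) := Nat.Coprime.mul_right hab hac
      have hahi : a ≤ hi := by
        apply (Nat.le_div_iff_mul_le hbc1).mpr
        have : a * (b * c) = a * b * c := by ring
        rw [this]
        exact hle
      exact ⟨⟨⟨by omega, hahi⟩, hsfa, habc⟩, hoa⟩
    · rintro ⟨⟨⟨halo, hahi⟩, hsfa, habc⟩, hoa⟩
      have hab : Nat.Coprime a b := Nat.Coprime.coprime_dvd_right (dvd_mul_right b c) habc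
      have hac : Nat.Coprime a c := Nat.Coprime.coprime_dvd_right (dvd_mul_left c b) habc
      have hle : a * b * c ≤ N := by
        have h1 : a * (b * c) ≤ N := (Nat.le_div_iff_mul_le hbc1).mp hahi
        have : a * (b * c) = a * b * c := by ring
        omega
      have hsf : Squarefree (a * b * c) := by
        have : a * b * c = a * (b * c) := by ring
        rw [this]
        exact Nat.squarefree_mul_iff.mpr ⟨habc, hsfa, hsfbc⟩
      have ha1 : 1 ≤ a := by omega
      have haN : a ≤ N := le_trans hahi (Nat.div_le_self N (b * c))
      exact ⟨⟨ha1, haN⟩, hoa, hob, hoc, hab, hac, hcbc, hsf, hle, by omega, by omega⟩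
  rw [hset]
  have hdrop : ∑ a ∈ ((Finset.Icc lo hi).filter
        (fun a => Squarefree a ∧ Nat.Coprime a (b * c))).filter (fun a => Odd a), chi4 a
      = ∑ a ∈ (Finset.Icc lo hi).filter
        (fun a => Squarefree a ∧ Nat.Coprime a (b * c)), chi4 a := by
    apply Finset.sum_filter_of_ne
    intro a _ hne
    by_contra hoa
    exact hne (chi4_of_even hoa)
  rw [hdrop]
  have hbound := T_interval lo hi (b * c) (by omega) (by omega)
  calc |∑ a ∈ (Finset.Icc lo hi).filter
        (fun a => Squarefree a ∧ Nat.Coprime a (b * c)), chi4 a|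
      ≤ 2 * Real.sqrt hi * ((b * c).divisors.card : ℝ) := hbound
    _ = 2 * Real.sqrt ((N / (b * c) : ℕ)) * ((b.divisors.card : ℝ) * c.divisors.card) := by
        rw [Nat.Coprime.card_divisors_mul hcbc]
        push_cast
        rfl











lemma sqrt_div_bound (N m : ℕ) (hm : 1 ≤ m) (hbig : m ^ 3 ≤ N ^ 2) :
    Real.sqrt ((N / m : ℕ)) ≤ Real.sqrt N * ((N:ℝ) ^ ((1:ℝ)/3)) / m := by
  have hm0 : (0:ℝ) < m := by exact_mod_cast hm
  have h1 : Real.sqrt ((N / m : ℕ)) ≤ Real.sqrt ((N:ℝ) / m) :=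
    Real.sqrt_le_sqrt Nat.cast_div_le
  have h2 : Real.sqrt ((N:ℝ) / m) = Real.sqrt N / Real.sqrt m := by
    rw [Real.sqrt_div (Nat.cast_nonneg N)]
  have h3 : (m:ℝ) ^ (3:ℕ) ≤ (N:ℝ) ^ (2:ℕ) := by exact_mod_cast hbig
  have h4 : (m:ℝ) ≤ ((N:ℝ) ^ (2:ℕ)) ^ ((1:ℝ)/3) := by
    calc (m:ℝ) = ((m:ℝ) ^ (3:ℕ)) ^ ((1:ℝ)/3) := by
          rw [← Real.rpow_natCast (m:ℝ) 3, ← Real.rpow_mul (by positivity)]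
          norm_num
      _ ≤ ((N:ℝ) ^ (2:ℕ)) ^ ((1:ℝ)/3) :=
          Real.rpow_le_rpow (by positivity) h3 (by norm_num)
  have h5 : Real.sqrt m ≤ (N:ℝ) ^ ((1:ℝ)/3) := by
    have hs : Real.sqrt (((N:ℝ) ^ (2:ℕ)) ^ ((1:ℝ)/3)) = (N:ℝ) ^ ((1:ℝ)/3) := by
      rw [Real.sqrt_eq_rpow, ← Real.rpow_natCast (N:ℝ) 2, ← Real.rpow_mul (Nat.cast_nonneg N),
        ← Real.rpow_mul (Nat.cast_nonneg N)]
      norm_num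
    calc Real.sqrt m ≤ Real.sqrt (((N:ℝ) ^ (2:ℕ)) ^ ((1:ℝ)/3)) := Real.sqrt_le_sqrt h4
      _ = (N:ℝ) ^ ((1:ℝ)/3) := hs
  have hsm : (0:ℝ) < Real.sqrt m := Real.sqrt_pos.mpr hm0
  have h6 : Real.sqrt N / Real.sqrt m ≤ Real.sqrt N * ((N:ℝ) ^ ((1:ℝ)/3)) / m := by
    rw [div_le_div_iff₀ hsm hm0]
    have hmm : (m:ℝ) = Real.sqrt m * Real.sqrt m := (Real.mul_self_sqrt (le_of_lt hm0)).symm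
    calc Real.sqrt N * m = Real.sqrt N * (Real.sqrt m * Real.sqrt m) := by rw [← hmm]
      _ ≤ Real.sqrt N * ((N:ℝ) ^ ((1:ℝ)/3) * Real.sqrt m) := by
          apply mul_le_mul_of_nonneg_left _ (Real.sqrt_nonneg _)
          exact mul_le_mul_of_nonneg_right h5 (Real.sqrt_nonneg _)
      _ = Real.sqrt N * ((N:ℝ) ^ ((1:ℝ)/3)) * Real.sqrt m := by ring
  calc Real.sqrt ((N / m : ℕ)) ≤ Real.sqrt ((N:ℝ) / m) := h1
    _ = Real.sqrt N / Real.sqrt m := h2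
    _ ≤ Real.sqrt N * ((N:ℝ) ^ ((1:ℝ)/3)) / m := h6

lemma GEN (N i₁ i₂ : ℕ) :
    |∑ t ∈ TS N, chi4 t.1 * chi4 t.2.1 * chi4 t.2.2 *
        (if t.2.1 + i₁ ≤ t.1 ∧ t.2.2 + i₂ ≤ t.1 then 1 else 0)|
      ≤ 2 * Real.sqrt N * ((N:ℝ) ^ ((1:ℝ)/3)) * (1 + Real.log N) ^ 4 := by
  rw [TS_decomp_first]
  have key : ∀ b ∈ Finset.Icc 1 N, ∀ c ∈ Finset.Icc 1 N,
      |chi4 b * chi4 c * ∑ a ∈ aset N b c i₁ i₂, chi4 a|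
        ≤ (if (b * c) ^ 3 ≤ N ^ 2
            then 2 * Real.sqrt N * ((N:ℝ) ^ ((1:ℝ)/3)) *
              (((b.divisors.card : ℝ) * c.divisors.card) / (b * c))
            else 0) := by
    intro b hb c hc
    obtain ⟨hb1, _⟩ := Finset.mem_Icc.mp hb
    obtain ⟨hc1, _⟩ := Finset.mem_Icc.mp hc
    have habs : |chi4 b * chi4 c * ∑ a ∈ aset N b c i₁ i₂, chi4 a|
        ≤ |∑ a ∈ aset N b c i₁ i₂, chi4 a| := by
      rw [abs_mul, abs_mul]
      calc |chi4 b| * |chi4 c| * |∑ a ∈ aset N b c i₁ i₂, chi4 a|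
          ≤ 1 * 1 * |∑ a ∈ aset N b c i₁ i₂, chi4 a| := by
            gcongr
            exacts [chi4_abs_le b, chi4_abs_le c]
        _ = |∑ a ∈ aset N b c i₁ i₂, chi4 a| := by ring
    apply le_trans habs
    apply le_trans (inner_bound N b c i₁ i₂ hb1 hc1)
    by_cases hbig : (b * c) ^ 3 ≤ N ^ 2
    · rw [if_pos hbig, if_pos hbig]
      have hbc1 : 1 ≤ b * c := Nat.mul_le_mul hb1 hc1
      have hs := sqrt_div_bound N (b * c) hbc1 hbig
      have hcast : ((b * c : ℕ) : ℝ) = (b:ℝ) * c := by push_cast; ring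
      rw [hcast] at hs
      have htau : (0:ℝ) ≤ (b.divisors.card : ℝ) * c.divisors.card := by positivity
      have hb0 : ((b:ℝ)) ≠ 0 := by positivity
      have hc0 : ((c:ℝ)) ≠ 0 := by positivity
      have h2 : 2 * Real.sqrt ((N / (b * c) : ℕ)) * ((b.divisors.card : ℝ) * c.divisors.card)
          ≤ 2 * (Real.sqrt N * ((N:ℝ) ^ ((1:ℝ)/3)) / ((b:ℝ) * c))
              * ((b.divisors.card : ℝ) * c.divisors.card) := by
        apply mul_le_mul_of_nonneg_right _ htau
        linarith
      apply le_trans h2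
      apply le_of_eq
      ring
    · rw [if_neg hbig, if_neg hbig]
  calc |∑ b ∈ Finset.Icc 1 N, ∑ c ∈ Finset.Icc 1 N,
        chi4 b * chi4 c * ∑ a ∈ aset N b c i₁ i₂, chi4 a|
      ≤ ∑ b ∈ Finset.Icc 1 N, ∑ c ∈ Finset.Icc 1 N,
          |chi4 b * chi4 c * ∑ a ∈ aset N b c i₁ i₂, chi4 a| := by
        apply le_trans (Finset.abs_sum_le_sum_abs _ _)
        apply Finset.sum_le_sum
        intro b _
        exact Finset.abs_sum_le_sum_abs _ _
    _ ≤ ∑ b ∈ Finset.Icc 1 N, ∑ c ∈ Finset.Icc 1 N,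
          (if (b * c) ^ 3 ≤ N ^ 2
            then 2 * Real.sqrt N * ((N:ℝ) ^ ((1:ℝ)/3)) *
              (((b.divisors.card : ℝ) * c.divisors.card) / (b * c))
            else 0) := by
        apply Finset.sum_le_sum
        intro b hb
        apply Finset.sum_le_sum
        intro c hc
        exact key b hb c hc
    _ = ∑ p ∈ (Finset.Icc 1 N ×ˢ Finset.Icc 1 N).filter (fun p => (p.1 * p.2) ^ 3 ≤ N ^ 2),
          2 * Real.sqrt N * ((N:ℝ) ^ ((1:ℝ)/3)) *
            (((p.1.divisors.card : ℝ) * p.2.divisors.card) / (p.1 * p.2)) := by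
        rw [Finset.sum_filter, Finset.sum_product]
    _ ≤ ∑ p ∈ pairSet N,
          2 * Real.sqrt N * ((N:ℝ) ^ ((1:ℝ)/3)) *
            (((p.1.divisors.card : ℝ) * p.2.divisors.card) / (p.1 * p.2)) := by
        apply Finset.sum_le_sum_of_subset_of_nonneg
        · intro p hp
          simp only [Finset.mem_filter, Finset.mem_product, Finset.mem_Icc] at hp
          obtain ⟨⟨⟨h1, h2⟩, ⟨h3, h4⟩⟩, h5⟩ := hp
          simp only [pairSet, Finset.mem_filter, Finset.mem_product, Finset.mem_Icc]
          refine ⟨⟨⟨h1, h2⟩, ⟨h3, h4⟩⟩, ?_⟩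
          by_contra hgt
          push_neg at hgt
          have hN1 : 1 ≤ N := le_trans h1 h2
          have hlt : N ^ 3 < (p.1 * p.2) ^ 3 := Nat.pow_lt_pow_left hgt (by norm_num)
          have hle : N ^ 2 ≤ N ^ 3 := Nat.pow_le_pow_right hN1 (by norm_num)
          omega
        · intro p _ _
          positivity
    _ = 2 * Real.sqrt N * ((N:ℝ) ^ ((1:ℝ)/3)) *
          ∑ p ∈ pairSet N, (((p.1.divisors.card : ℝ) * p.2.divisors.card) / (p.1 * p.2)) := by
        rw [Finset.mul_sum]
    _ ≤ 2 * Real.sqrt N * ((N:ℝ) ^ ((1:ℝ)/3)) * (1 + Real.log N) ^ 4 := by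
        apply mul_le_mul_of_nonneg_left (W_le N) (by positivity)

lemma tri_ind (u v w : ℕ) :
    (if v + 0 ≤ u ∧ w + 0 ≤ u then (1:ℝ) else 0)
      + ((if u + 1 ≤ v ∧ w + 0 ≤ v then 1 else 0)
      + (if u + 1 ≤ w ∧ v + 1 ≤ w then 1 else 0)) = 1 := by
  simp only [add_zero]
  by_cases h1 : v ≤ u ∧ w ≤ u <;> by_cases h2 : u + 1 ≤ v ∧ w ≤ v <;>
    by_cases h3 : u + 1 ≤ w ∧ v + 1 ≤ w <;>
    first | (exfalso; omega) | (split_ifs <;> first | (exfalso; omega) | norm_num)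

lemma S111_bound (N : ℕ) :
    |∑ t ∈ TS N, chi4 t.1 * chi4 t.2.1 * chi4 t.2.2|
      ≤ 6 * Real.sqrt N * ((N:ℝ) ^ ((1:ℝ)/3)) * (1 + Real.log N) ^ 4 := by
  have hsplit : ∑ t ∈ TS N, chi4 t.1 * chi4 t.2.1 * chi4 t.2.2
      = (∑ t ∈ TS N, chi4 t.1 * chi4 t.2.1 * chi4 t.2.2 *
            (if t.2.1 + 0 ≤ t.1 ∧ t.2.2 + 0 ≤ t.1 then 1 else 0))
        + ((∑ t ∈ TS N, chi4 t.1 * chi4 t.2.1 * chi4 t.2.2 *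
            (if t.1 + 1 ≤ t.2.1 ∧ t.2.2 + 0 ≤ t.2.1 then 1 else 0))
        + (∑ t ∈ TS N, chi4 t.1 * chi4 t.2.1 * chi4 t.2.2 *
            (if t.1 + 1 ≤ t.2.2 ∧ t.2.1 + 1 ≤ t.2.2 then 1 else 0))) := by
    rw [← Finset.sum_add_distrib, ← Finset.sum_add_distrib]
    apply Finset.sum_congr rfl
    intro t _
    rw [← mul_add, ← mul_add, tri_ind t.1 t.2.1 t.2.2, mul_one]
  rw [hsplit]
  have hp1 := GEN N 0 0
  have hp2 : |∑ t ∈ TS N, chi4 t.1 * chi4 t.2.1 * chi4 t.2.2 *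
      (if t.1 + 1 ≤ t.2.1 ∧ t.2.2 + 0 ≤ t.2.1 then 1 else 0)|
      ≤ 2 * Real.sqrt N * ((N:ℝ) ^ ((1:ℝ)/3)) * (1 + Real.log N) ^ 4 := by
    have hsw := TS_swap12 N (fun x y z => chi4 x * chi4 y * chi4 z *
      (if y + 1 ≤ x ∧ z + 0 ≤ x then 1 else 0))
    have heq : ∑ t ∈ TS N, chi4 t.1 * chi4 t.2.1 * chi4 t.2.2 *
        (if t.1 + 1 ≤ t.2.1 ∧ t.2.2 + 0 ≤ t.2.1 then 1 else 0)
        = ∑ t ∈ TS N, chi4 t.1 * chi4 t.2.1 * chi4 t.2.2 *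
        (if t.2.1 + 1 ≤ t.1 ∧ t.2.2 + 0 ≤ t.1 then 1 else 0) := by
      rw [hsw]
      apply Finset.sum_congr rfl
      intro t _
      ring
    rw [heq]
    exact GEN N 1 0
  have hp3 : |∑ t ∈ TS N, chi4 t.1 * chi4 t.2.1 * chi4 t.2.2 *
      (if t.1 + 1 ≤ t.2.2 ∧ t.2.1 + 1 ≤ t.2.2 then 1 else 0)|
      ≤ 2 * Real.sqrt N * ((N:ℝ) ^ ((1:ℝ)/3)) * (1 + Real.log N) ^ 4 := by
    have hsw := TS_swap13 N (fun x y z => chi4 x * chi4 y * chi4 z *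
      (if y + 1 ≤ x ∧ z + 1 ≤ x then 1 else 0))
    have heq : ∑ t ∈ TS N, chi4 t.1 * chi4 t.2.1 * chi4 t.2.2 *
        (if t.1 + 1 ≤ t.2.2 ∧ t.2.1 + 1 ≤ t.2.2 then 1 else 0)
        = ∑ t ∈ TS N, chi4 t.1 * chi4 t.2.1 * chi4 t.2.2 *
        (if t.2.1 + 1 ≤ t.1 ∧ t.2.2 + 1 ≤ t.1 then 1 else 0) := by
      rw [hsw]
      apply Finset.sum_congr rfl
      intro t _
      rw [if_congr (and_comm) rfl rfl]
      ring
    rw [heq]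
    exact GEN N 1 1
  have habs := abs_add_le (∑ t ∈ TS N, chi4 t.1 * chi4 t.2.1 * chi4 t.2.2 *
        (if t.2.1 + 0 ≤ t.1 ∧ t.2.2 + 0 ≤ t.1 then 1 else 0))
      ((∑ t ∈ TS N, chi4 t.1 * chi4 t.2.1 * chi4 t.2.2 *
        (if t.1 + 1 ≤ t.2.1 ∧ t.2.2 + 0 ≤ t.2.1 then 1 else 0))
      + (∑ t ∈ TS N, chi4 t.1 * chi4 t.2.1 * chi4 t.2.2 *
        (if t.1 + 1 ≤ t.2.2 ∧ t.2.1 + 1 ≤ t.2.2 then 1 else 0)))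
  have habs2 := abs_add_le (∑ t ∈ TS N, chi4 t.1 * chi4 t.2.1 * chi4 t.2.2 *
        (if t.1 + 1 ≤ t.2.1 ∧ t.2.2 + 0 ≤ t.2.1 then 1 else 0))
      (∑ t ∈ TS N, chi4 t.1 * chi4 t.2.1 * chi4 t.2.2 *
        (if t.1 + 1 ≤ t.2.2 ∧ t.2.1 + 1 ≤ t.2.2 then 1 else 0))
  linarith







def B1 (N : ℕ) : ℝ := (N:ℝ) * (1 + Real.log N)
def B2 (N : ℕ) : ℝ := 6 * Real.sqrt N * ((N:ℝ) ^ ((1:ℝ)/3)) * (1 + Real.log N) ^ 4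

lemma B1_nonneg (N : ℕ) : 0 ≤ B1 N := mul_nonneg (Nat.cast_nonneg N) (one_add_log_nonneg N)

lemma B2_nonneg (N : ℕ) : 0 ≤ B2 N := by
  rw [B2]
  have := one_add_log_nonneg N
  positivity

lemma bsq_abs : ∀ n : ℕ, |chi4 n ^ 2| ≤ 1 := by
  intro n
  rw [abs_pow]
  calc |chi4 n| ^ 2 ≤ 1 ^ 2 := pow_le_pow_left₀ (abs_nonneg _) (chi4_abs_le n) 2
    _ = 1 := one_pow 2

lemma case_bound (ν₁ ν₂ ν₃ : ℕ)
    (h₁ : ν₁ = 1 ∨ ν₁ = 2) (h₂ : ν₂ = 1 ∨ ν₂ = 2) (h₃ : ν₃ = 1 ∨ ν₃ = 2)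
    (hnot : ¬ (ν₁ = 2 ∧ ν₂ = 2 ∧ ν₃ = 2)) (N : ℕ) :
    |charTripleSum ν₁ ν₂ ν₃ N| ≤ B1 N + B2 N := by
  have hTS : ∀ μ₁ μ₂ μ₃ : ℕ, charTripleSum μ₁ μ₂ μ₃ N
      = ∑ t ∈ TS N, chi4 t.1 ^ μ₁ * chi4 t.2.1 ^ μ₂ * chi4 t.2.2 ^ μ₃ := fun _ _ _ => rfl
  have hKA : ∀ S : ℝ, (∃ b : ℕ → ℝ, (∀ n, |b n| ≤ 1) ∧
      S = ∑ t ∈ TS N, chi4 t.1 * chi4 t.2.1 ^ 2 * b t.2.2) → |S| ≤ B1 N + B2 N := by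
    rintro S ⟨b, hb, rfl⟩
    exact le_trans (KA N b hb) (le_add_of_nonneg_right (B2_nonneg N))
  rcases h₁ with rfl | rfl <;> rcases h₂ with rfl | rfl <;> rcases h₃ with rfl | rfl
  · -- (1,1,1)
    rw [hTS]
    have heq : ∑ t ∈ TS N, chi4 t.1 ^ 1 * chi4 t.2.1 ^ 1 * chi4 t.2.2 ^ 1
        = ∑ t ∈ TS N, chi4 t.1 * chi4 t.2.1 * chi4 t.2.2 := by
      apply Finset.sum_congr rfl; intro t _; rw [pow_one, pow_one, pow_one]
    rw [heq]
    exact le_trans (S111_bound N) (le_add_of_nonneg_left (B1_nonneg N))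
  · -- (1,1,2)
    rw [hTS]
    apply hKA
    refine ⟨fun n => chi4 n, chi4_abs_le, ?_⟩
    have h0 : ∑ t ∈ TS N, chi4 t.1 ^ 1 * chi4 t.2.1 ^ 1 * chi4 t.2.2 ^ 2
        = ∑ t ∈ TS N, (fun x y z => chi4 x * chi4 y * chi4 z ^ 2) t.1 t.2.1 t.2.2 := by
      apply Finset.sum_congr rfl; intro t _; simp only [pow_one]
    rw [h0, TS_swap23 N (fun x y z => chi4 x * chi4 y * chi4 z ^ 2)]
    apply Finset.sum_congr rfl; intro t _; ring
  · -- (1,2,1)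
    rw [hTS]
    apply hKA
    refine ⟨fun n => chi4 n, chi4_abs_le, ?_⟩
    apply Finset.sum_congr rfl; intro t _; rw [pow_one, pow_one]
  · -- (1,2,2)
    rw [hTS]
    apply hKA
    refine ⟨fun n => chi4 n ^ 2, bsq_abs, ?_⟩
    apply Finset.sum_congr rfl; intro t _; rw [pow_one]
  · -- (2,1,1)
    rw [hTS]
    apply hKA
    refine ⟨fun n => chi4 n, chi4_abs_le, ?_⟩
    have h0 : ∑ t ∈ TS N, chi4 t.1 ^ 2 * chi4 t.2.1 ^ 1 * chi4 t.2.2 ^ 1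
        = ∑ t ∈ TS N, (fun x y z => chi4 x ^ 2 * chi4 y * chi4 z) t.1 t.2.1 t.2.2 := by
      apply Finset.sum_congr rfl; intro t _; simp only [pow_one]
    rw [h0, TS_swap12 N (fun x y z => chi4 x ^ 2 * chi4 y * chi4 z)]
    apply Finset.sum_congr rfl; intro t _; ring
  · -- (2,1,2)
    rw [hTS]
    apply hKA
    refine ⟨fun n => chi4 n ^ 2, bsq_abs, ?_⟩
    have h0 : ∑ t ∈ TS N, chi4 t.1 ^ 2 * chi4 t.2.1 ^ 1 * chi4 t.2.2 ^ 2
        = ∑ t ∈ TS N, (fun x y z => chi4 x ^ 2 * chi4 y * chi4 z ^ 2) t.1 t.2.1 t.2.2 := by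
      apply Finset.sum_congr rfl; intro t _; simp only [pow_one]
    rw [h0, TS_swap12 N (fun x y z => chi4 x ^ 2 * chi4 y * chi4 z ^ 2)]
    apply Finset.sum_congr rfl; intro t _; ring
  · -- (2,2,1)
    rw [hTS]
    apply hKA
    refine ⟨fun n => chi4 n ^ 2, bsq_abs, ?_⟩
    have h0 : ∑ t ∈ TS N, chi4 t.1 ^ 2 * chi4 t.2.1 ^ 2 * chi4 t.2.2 ^ 1
        = ∑ t ∈ TS N, (fun x y z => chi4 x ^ 2 * chi4 y ^ 2 * chi4 z) t.1 t.2.1 t.2.2 := by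
      apply Finset.sum_congr rfl; intro t _; simp only [pow_one]
    rw [h0, TS_swap13 N (fun x y z => chi4 x ^ 2 * chi4 y ^ 2 * chi4 z)]
    apply Finset.sum_congr rfl; intro t _; ring
  · -- (2,2,2) excluded
    exact absurd ⟨rfl, rfl, rfl⟩ hnot

lemma log_le_rpow (N : ℕ) (hN : 1 ≤ N) : Real.log N ≤ 18 * (N:ℝ) ^ ((1:ℝ)/18) := by
  have h0 : (0:ℝ) < N := by exact_mod_cast hN
  have h1 : Real.log ((N:ℝ) ^ ((1:ℝ)/18)) = (1/18) * Real.log N := Real.log_rpow h0 _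
  have h2 : Real.log ((N:ℝ) ^ ((1:ℝ)/18)) ≤ (N:ℝ) ^ ((1:ℝ)/18) - 1 :=
    Real.log_le_sub_one_of_pos (Real.rpow_pos_of_pos h0 _)
  nlinarith [Real.rpow_pos_of_pos h0 ((1:ℝ)/18)]


end Aux15


open Aux15 in
theorem stmt15 (ν₁ ν₂ ν₃ : ℕ)
    (h₁ : ν₁ = 1 ∨ ν₁ = 2) (h₂ : ν₂ = 1 ∨ ν₂ = 2) (h₃ : ν₃ = 1 ∨ ν₃ = 2)
    (hnot : ¬ (ν₁ = 2 ∧ ν₂ = 2 ∧ ν₃ = 2)) :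
    (fun N : ℕ => charTripleSum ν₁ ν₂ ν₃ N)
      =O[atTop] (fun N : ℕ => (N : ℝ) * Real.log N) := by
  rw [Asymptotics.isBigO_iff]
  refine ⟨1000000, ?_⟩
  filter_upwards [eventually_ge_atTop 3] with N hN3
  have hN1 : (1:ℝ) ≤ (N:ℝ) := by exact_mod_cast le_trans (by norm_num) hN3
  have hN0 : (0:ℝ) < (N:ℝ) := by linarith
  have hlog1 : 1 ≤ Real.log N := by
    have h3 : Real.exp 1 ≤ 3 := by
      have := Real.exp_one_lt_d9
      linarith
    calc (1:ℝ) = Real.log (Real.exp 1) := (Real.log_exp 1).symm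
      _ ≤ Real.log 3 := Real.log_le_log (Real.exp_pos 1) h3
      _ ≤ Real.log N := Real.log_le_log (by norm_num) (by exact_mod_cast hN3)
  have hlogpos : (0:ℝ) < Real.log N := by linarith
  have hcb := case_bound ν₁ ν₂ ν₃ h₁ h₂ h₃ hnot N
  have hb1 : B1 N ≤ 2 * ((N:ℝ) * Real.log N) := by
    rw [B1]; nlinarith
  have hlog18 := log_le_rpow N (by omega)
  have hcube : (Real.log N) ^ 3 ≤ 5832 * (N:ℝ) ^ ((1:ℝ)/6) := by
    calc (Real.log N) ^ 3 ≤ (18 * (N:ℝ) ^ ((1:ℝ)/18)) ^ 3 :=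
          pow_le_pow_left₀ (le_of_lt hlogpos) hlog18 3
      _ = 5832 * ((N:ℝ) ^ ((1:ℝ)/18)) ^ (3:ℕ) := by ring
      _ = 5832 * (N:ℝ) ^ ((1:ℝ)/6) := by
          rw [← Real.rpow_natCast ((N:ℝ) ^ ((1:ℝ)/18)) 3, ← Real.rpow_mul (le_of_lt hN0)]
          norm_num
  have h56 : Real.sqrt N * (N:ℝ) ^ ((1:ℝ)/3) = (N:ℝ) ^ ((5:ℝ)/6) := by
    rw [Real.sqrt_eq_rpow, ← Real.rpow_add hN0]
    norm_num
  have h1p : (1 + Real.log N) ^ 4 ≤ (2 * Real.log N) ^ 4 :=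
    pow_le_pow_left₀ (by linarith) (by linarith) 4
  have hNsplit : (N:ℝ) ^ ((5:ℝ)/6) * (N:ℝ) ^ ((1:ℝ)/6) = (N:ℝ) := by
    rw [← Real.rpow_add hN0]
    norm_num
  have hrpow56 : (0:ℝ) ≤ (N:ℝ) ^ ((5:ℝ)/6) := Real.rpow_nonneg (le_of_lt hN0) _
  have hb2 : B2 N ≤ 559872 * ((N:ℝ) * Real.log N) := by
    calc B2 N = 6 * ((N:ℝ) ^ ((5:ℝ)/6)) * (1 + Real.log N) ^ 4 := by
          rw [B2, ← h56]; ring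
      _ ≤ 6 * ((N:ℝ) ^ ((5:ℝ)/6)) * (2 * Real.log N) ^ 4 := by
          apply mul_le_mul_of_nonneg_left h1p (by positivity)
      _ = 96 * ((N:ℝ) ^ ((5:ℝ)/6)) * (Real.log N) ^ 3 * Real.log N := by ring
      _ ≤ 96 * ((N:ℝ) ^ ((5:ℝ)/6)) * (5832 * (N:ℝ) ^ ((1:ℝ)/6)) * Real.log N := by
          apply mul_le_mul_of_nonneg_right _ (le_of_lt hlogpos)
          apply mul_le_mul_of_nonneg_left hcube (by positivity)
      _ = 559872 * (((N:ℝ) ^ ((5:ℝ)/6) * (N:ℝ) ^ ((1:ℝ)/6)) * Real.log N) := by ring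
      _ = 559872 * ((N:ℝ) * Real.log N) := by rw [hNsplit]
  have hnn : (0:ℝ) ≤ (N:ℝ) * Real.log N := by positivity
  rw [Real.norm_eq_abs, Real.norm_eq_abs, abs_of_nonneg hnn]
  calc |charTripleSum ν₁ ν₂ ν₃ N| ≤ B1 N + B2 N := hcb
    _ ≤ 2 * ((N:ℝ) * Real.log N) + 559872 * ((N:ℝ) * Real.log N) := add_le_add hb1 hb2
    _ ≤ 1000000 * ((N:ℝ) * Real.log N) := by nlinarith
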